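/- arXiv:1101.5771 — 5 statements merged into one kernel-verified Lean document; each statement's English description precedes it below -/
import Mathlib

section
/- Let V : ℝ² → ℝ be continuously differentiable and suppose there is a constant c such that y·∂V/∂x(x,y) - x·∂V/∂y(x,y) = c for all (x,y). If (x,y) : ℝ → ℝ² satisfies x'' = -∂V/∂x ∘ (x,y) and y'' = -∂V/∂y ∘ (x,y), then the quantity x(t)·y'(t) - y(t)·x'(t) + c·t is constant in t. -/
/-!
Along a solution, the angular momentum `L = x y' - y x'` satisfies
`L' = x y'' - y x'' = y V_x - x V_y = c`, so `L - c t` is conserved. The rotation field vanishes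
at the origin, so the hypothesis there forces `c = 0`, and `L + c t` is conserved as well.
-/

noncomputable def angularMomentum (x y : ℝ → ℝ) (t : ℝ) : ℝ :=
  x t * deriv y t - y t * deriv x t

theorem hasDerivAt_angularMomentum {x y : ℝ → ℝ} {t : ℝ} (hx : DifferentiableAt ℝ x t)
    (hx' : DifferentiableAt ℝ (deriv x) t) (hy : DifferentiableAt ℝ y t)
    (hy' : DifferentiableAt ℝ (deriv y) t) :
    HasDerivAt (angularMomentum x y)
      (x t * deriv (deriv y) t - y t * deriv (deriv x) t) t := by
  have h := (hx.hasDerivAt.mul hy'.hasDerivAt).sub (hy.hasDerivAt.mul hx'.hasDerivAt)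
  rw [show x t * deriv (deriv y) t - y t * deriv (deriv x) t =
      deriv x t * deriv y t + x t * deriv (deriv y) t -
        (deriv y t * deriv x t + y t * deriv (deriv x) t) by ring]
  exact h

theorem angularMomentum_sub_mul_eq {x y : ℝ → ℝ} (hx : Differentiable ℝ x)
    (hx' : Differentiable ℝ (deriv x)) (hy : Differentiable ℝ y)
    (hy' : Differentiable ℝ (deriv y)) {k : ℝ}
    (htorque : ∀ t, x t * deriv (deriv y) t - y t * deriv (deriv x) t = k) (t s : ℝ) :
    angularMomentum x y t - k * t = angularMomentum x y s - k * s := by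
  have hderiv (u : ℝ) : HasDerivAt (fun u => angularMomentum x y u - k * u) 0 u := by
    have h := (hasDerivAt_angularMomentum (hx u) (hx' u) (hy u) (hy' u)).sub
      ((hasDerivAt_id u).const_mul k)
    rwa [htorque u, mul_one, sub_self] at h
  exact is_const_of_deriv_eq_zero (fun u => (hderiv u).differentiableAt)
    (fun u => (hderiv u).deriv) t s

theorem stmt_1_general (V : ℝ × ℝ → ℝ) (c : ℝ)
    (hrot : ∀ p : ℝ × ℝ, p.2 * fderiv ℝ V p (1, 0) - p.1 * fderiv ℝ V p (0, 1) = c)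
    (x y : ℝ → ℝ)
    (hx : Differentiable ℝ x) (hx' : Differentiable ℝ (deriv x))
    (hy : Differentiable ℝ y) (hy' : Differentiable ℝ (deriv y))
    (hxeq : ∀ t, deriv (deriv x) t = -(fderiv ℝ V (x t, y t) (1, 0)))
    (hyeq : ∀ t, deriv (deriv y) t = -(fderiv ℝ V (x t, y t) (0, 1))) :
    ∀ t s : ℝ,
      x t * deriv y t - y t * deriv x t + c * t =
      x s * deriv y s - y s * deriv x s + c * s := by
  have htorque (t : ℝ) : x t * deriv (deriv y) t - y t * deriv (deriv x) t = c := by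
    rw [hxeq, hyeq, ← hrot (x t, y t)]
    ring
  have hc : c = 0 := by simpa using (hrot 0).symm
  intro t s
  have hconst := angularMomentum_sub_mul_eq hx hx' hy hy' htorque t s
  subst hc
  simpa [angularMomentum] using hconst

theorem stmt_1 (V : ℝ × ℝ → ℝ) (hV : ContDiff ℝ 1 V) (c : ℝ)
    (hrot : ∀ p : ℝ × ℝ, p.2 * fderiv ℝ V p (1, 0) - p.1 * fderiv ℝ V p (0, 1) = c)
    (x y : ℝ → ℝ)
    (hx : Differentiable ℝ x) (hx' : Differentiable ℝ (deriv x))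
    (hy : Differentiable ℝ y) (hy' : Differentiable ℝ (deriv y))
    (hxeq : ∀ t, deriv (deriv x) t = -(fderiv ℝ V (x t, y t) (1, 0)))
    (hyeq : ∀ t, deriv (deriv y) t = -(fderiv ℝ V (x t, y t) (0, 1))) :
    ∀ t s : ℝ,
      x t * deriv y t - y t * deriv x t + c * t =
      x s * deriv y s - y s * deriv x s + c * s :=
  stmt_1_general V c hrot x y hx hx' hy hy' hxeq hyeq
end

section
/- Let V : ℝ² \ {0} → ℝ be continuously differentiable and homogeneous of degree -2, i.e. x·∂V/∂x + y·∂V/∂y = -2V identically. Let (x,y) be a solution of x'' = -∂V/∂x ∘ (x,y), y'' = -∂V/∂y ∘ (x,y) with (x(t),y(t)) ≠ 0, and let E = (1/2)(x'² + y'²) + V(x,y) be the (constant) energy. Then the quantity I₁(t) = 2tE - (x(t)x'(t) + y(t)y'(t)) is constant in t. -/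
theorem stmt_3 (V : ℝ × ℝ → ℝ)
    (hV : ∀ p : ℝ × ℝ, p ≠ 0 → ContDiffAt ℝ 1 V p)
    (hhom : ∀ p : ℝ × ℝ, p ≠ 0 →
      p.1 * fderiv ℝ V p (1, 0) + p.2 * fderiv ℝ V p (0, 1) = -2 * V p)
    (x y : ℝ → ℝ)
    (hne : ∀ t, (x t, y t) ≠ (0 : ℝ × ℝ))
    (hx : Differentiable ℝ x) (hx' : Differentiable ℝ (deriv x))
    (hy : Differentiable ℝ y) (hy' : Differentiable ℝ (deriv y))
    (hxeq : ∀ t, deriv (deriv x) t = -(fderiv ℝ V (x t, y t) (1, 0)))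
    (hyeq : ∀ t, deriv (deriv y) t = -(fderiv ℝ V (x t, y t) (0, 1)))
    (E : ℝ)
    (hE : ∀ t, E = (1/2) * ((deriv x t)^2 + (deriv y t)^2) + V (x t, y t)) :
    ∀ t s : ℝ,
      2 * t * E - (x t * deriv x t + y t * deriv y t) =
      2 * s * E - (x s * deriv x s + y s * deriv y s) := by
  have key : ∀ t : ℝ, HasDerivAt
      (fun t => 2 * t * E - (x t * deriv x t + y t * deriv y t)) 0 t := by
    intro t
    have h1 : HasDerivAt (fun t => 2 * t * E) (2 * E) t := by
      simpa using ((hasDerivAt_id t).const_mul 2).mul_const E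
    have h2 : HasDerivAt (fun t => x t * deriv x t)
        (deriv x t * deriv x t + x t * deriv (deriv x) t) t :=
      ((hx t).hasDerivAt).mul ((hx' t).hasDerivAt)
    have h3 : HasDerivAt (fun t => y t * deriv y t)
        (deriv y t * deriv y t + y t * deriv (deriv y) t) t :=
      ((hy t).hasDerivAt).mul ((hy' t).hasDerivAt)
    have h := h1.sub (h2.add h3)
    have hz : 2 * E - (deriv x t * deriv x t + x t * deriv (deriv x) t +
        (deriv y t * deriv y t + y t * deriv (deriv y) t)) = 0 := by
      have hh := hhom (x t, y t) (hne t)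
      simp only at hh
      rw [hxeq t, hyeq t]
      have hEt := hE t
      nlinarith [hh, hEt]
    rwa [hz] at h
  intro t s
  have : ∀ a b : ℝ, (fun t => 2 * t * E - (x t * deriv x t + y t * deriv y t)) a
      = (fun t => 2 * t * E - (x t * deriv x t + y t * deriv y t)) b := by
    intro a b
    exact is_const_of_deriv_eq_zero (fun u => (key u).differentiableAt)
      (fun u => (key u).deriv) a b
  simpa using this t s
end

section
/- Let V : ℝ² \ {0} → ℝ be continuously differentiable with x·∂V/∂x + y·∂V/∂y = -2V identically. Let (x,y) be a solution of x'' = -∂V/∂x ∘ (x,y), y'' = -∂V/∂y ∘ (x,y) avoiding the origin, and let E denote the constant energy (1/2)(x'² + y'²) + V(x,y). Then I₂(t) = t²E - t(x(t)x'(t) + y(t)y'(t)) + (1/2)(x(t)² + y(t)²) is constant in t. -/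
theorem stmt_4 (V : ℝ × ℝ → ℝ)
    (hV : ∀ p : ℝ × ℝ, p ≠ 0 → ContDiffAt ℝ 1 V p)
    (hhom : ∀ p : ℝ × ℝ, p ≠ 0 →
      p.1 * fderiv ℝ V p (1, 0) + p.2 * fderiv ℝ V p (0, 1) = -2 * V p)
    (x y : ℝ → ℝ)
    (hne : ∀ t, (x t, y t) ≠ (0 : ℝ × ℝ))
    (hx : Differentiable ℝ x) (hx' : Differentiable ℝ (deriv x))
    (hy : Differentiable ℝ y) (hy' : Differentiable ℝ (deriv y))
    (hxeq : ∀ t, deriv (deriv x) t = -(fderiv ℝ V (x t, y t) (1, 0)))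
    (hyeq : ∀ t, deriv (deriv y) t = -(fderiv ℝ V (x t, y t) (0, 1)))
    (E : ℝ)
    (hE : ∀ t, E = (1/2) * ((deriv x t)^2 + (deriv y t)^2) + V (x t, y t)) :
    ∀ t s : ℝ,
      t^2 * E - t * (x t * deriv x t + y t * deriv y t) + (1/2) * ((x t)^2 + (y t)^2) =
      s^2 * E - s * (x s * deriv x s + y s * deriv y s) + (1/2) * ((x s)^2 + (y s)^2) := by
  set f : ℝ → ℝ := fun t =>
    t^2 * E - t * (x t * deriv x t + y t * deriv y t) + (1/2) * ((x t)^2 + (y t)^2) with hfdef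
  have key : ∀ r : ℝ, HasDerivAt f 0 r := by
    intro r
    have hx1 : HasDerivAt x (deriv x r) r := (hx r).hasDerivAt
    have hx2 : HasDerivAt (deriv x) (deriv (deriv x) r) r := (hx' r).hasDerivAt
    have hy1 : HasDerivAt y (deriv y r) r := (hy r).hasDerivAt
    have hy2 : HasDerivAt (deriv y) (deriv (deriv y) r) r := (hy' r).hasDerivAt
    have hu : HasDerivAt (fun t => x t * deriv x t + y t * deriv y t)
        (deriv x r * deriv x r + x r * deriv (deriv x) r
          + (deriv y r * deriv y r + y r * deriv (deriv y) r)) r :=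
      (hx1.mul hx2).add (hy1.mul hy2)
    have ht : HasDerivAt (fun t : ℝ => t ^ 2 * E) (2 * r * E) r := by
      simpa [pow_one, mul_comm, mul_assoc] using (hasDerivAt_pow 2 r).mul_const E
    have htu : HasDerivAt (fun t => t * (x t * deriv x t + y t * deriv y t))
        (1 * (x r * deriv x r + y r * deriv y r)
          + r * (deriv x r * deriv x r + x r * deriv (deriv x) r
            + (deriv y r * deriv y r + y r * deriv (deriv y) r))) r :=
      (hasDerivAt_id r).mul hu
    have hsq : HasDerivAt (fun t => (1/2 : ℝ) * ((x t)^2 + (y t)^2))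
        ((1/2) * (2 * x r ^ 1 * deriv x r + 2 * y r ^ 1 * deriv y r)) r :=
      ((hx1.pow 2).add (hy1.pow 2)).const_mul (1/2)
    have hf : HasDerivAt f
        (2 * r * E
          - (1 * (x r * deriv x r + y r * deriv y r)
            + r * (deriv x r * deriv x r + x r * deriv (deriv x) r
              + (deriv y r * deriv y r + y r * deriv (deriv y) r)))
          + (1/2) * (2 * x r ^ 1 * deriv x r + 2 * y r ^ 1 * deriv y r)) r :=
      (ht.sub htu).add hsq
    have h1 := hhom (x r, y r) (hne r)
    have h2 := hxeq r
    have h3 := hyeq r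
    have h4 := hE r
    simp only at h1
    convert hf using 1
    rw [h2, h3]
    linear_combination (-2*r)*h4 - r*h1
  intro t s
  have := is_const_of_deriv_eq_zero (f := f)
    (fun r => (key r).differentiableAt) (fun r => (key r).deriv) t s
  simpa [hfdef] using this
end

section
/- Let ω > 0 and let V : ℝ² → ℝ be given by V(x,y) = (ω²/2)(x² + y²) + W(x,y), where W is continuously differentiable and satisfies x·∂W/∂x + y·∂W/∂y = -2W. Let (x,y) be a solution of x'' = -∂V/∂x ∘ (x,y), y'' = -∂V/∂y ∘ (x,y), and let E = (1/2)(x'² + y'²) + V(x,y). Then the quantity I(t) = -(1/ω)cos(2ωt)·E - sin(2ωt)·(x x' + y y') + ω cos(2ωt)·(x² + y²) is constant in t. -/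
/-!
Write `ρ = x² + y²` and `D = x x' + y y'`. Euler's relation `x W_x + y W_y = -2W` turns the
virial identity `D' = x'² + y'² + x x'' + y y''` into `D' = 2E - 2ω²ρ`, while `ρ' = 2D`.
The energy `E` being constant, `(ρ, D)` solves a linear system with constant coefficients whose
solutions oscillate at frequency `2ω`, and `I` is the conserved quantity of that system.
-/

open Real

theorem cos_sin_combination_const_of_hasDerivAt {ω E : ℝ} (hω : ω ≠ 0) {ρ D : ℝ → ℝ}
    (hρ : ∀ t, HasDerivAt ρ (2 * D t) t)
    (hD : ∀ t, HasDerivAt D (2 * E - 2 * ω ^ 2 * ρ t) t) (t s : ℝ) :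
    -(1/ω) * cos (2*ω*t) * E - sin (2*ω*t) * D t + ω * cos (2*ω*t) * ρ t =
      -(1/ω) * cos (2*ω*s) * E - sin (2*ω*s) * D s + ω * cos (2*ω*s) * ρ s := by
  have hderiv : ∀ u, HasDerivAt
      (fun t => -(1/ω) * cos (2*ω*t) * E - sin (2*ω*t) * D t + ω * cos (2*ω*t) * ρ t) 0 u := by
    intro u
    have hphase : HasDerivAt (fun t : ℝ => 2*ω*t) (2*ω) u := by
      simpa using (hasDerivAt_id u).const_mul (2*ω)
    refine ((((hphase.cos.const_mul (-(1/ω))).mul_const E).sub (hphase.sin.mul (hD u))).add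
      ((hphase.cos.const_mul ω).mul (hρ u))).congr_deriv ?_
    field_simp
    ring
  exact is_const_of_deriv_eq_zero (fun u => (hderiv u).differentiableAt)
    (fun u => (hderiv u).deriv) t s

theorem fderiv_isotropicOscillator_add_apply {W : ℝ × ℝ → ℝ} {p : ℝ × ℝ}
    (hW : DifferentiableAt ℝ W p) (ω : ℝ) (v : ℝ × ℝ) :
    fderiv ℝ (fun q : ℝ × ℝ => (ω^2 / 2) * (q.1^2 + q.2^2) + W q) p v =
      ω ^ 2 * (p.1 * v.1 + p.2 * v.2) + fderiv ℝ W p v := by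
  have hquad := ((hasFDerivAt_fst (p := p) (𝕜 := ℝ) (E := ℝ) (F := ℝ)).pow 2).add
    (hasFDerivAt_snd.pow 2)
  have hV : HasFDerivAt (fun q : ℝ × ℝ => (ω^2 / 2) * (q.1^2 + q.2^2) + W q) _ p :=
    (hquad.const_mul (ω^2/2)).add hW.hasFDerivAt
  rw [hV.fderiv]
  simp only [Nat.add_one_sub_one, pow_one, nsmul_eq_mul, Nat.cast_ofNat, smul_add,
    add_apply, smul_apply, ContinuousLinearMap.coe_fst',
    smul_eq_mul, ContinuousLinearMap.coe_snd']
  ring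

theorem radial_fderiv_isotropicOscillator_add {W : ℝ × ℝ → ℝ} {p : ℝ × ℝ}
    (hW : DifferentiableAt ℝ W p) (ω : ℝ)
    (hhom : p.1 * fderiv ℝ W p (1, 0) + p.2 * fderiv ℝ W p (0, 1) = -2 * W p) :
    p.1 * fderiv ℝ (fun q : ℝ × ℝ => (ω^2 / 2) * (q.1^2 + q.2^2) + W q) p (1, 0) +
        p.2 * fderiv ℝ (fun q : ℝ × ℝ => (ω^2 / 2) * (q.1^2 + q.2^2) + W q) p (0, 1) =
      ω ^ 2 * (p.1 ^ 2 + p.2 ^ 2) - 2 * W p := by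
  simp only [fderiv_isotropicOscillator_add_apply hW]
  linear_combination hhom

theorem stmt_5 (ω : ℝ) (hω : 0 < ω) (W : ℝ × ℝ → ℝ) (hW : ContDiff ℝ 1 W)
    (hhom : ∀ p : ℝ × ℝ,
      p.1 * fderiv ℝ W p (1, 0) + p.2 * fderiv ℝ W p (0, 1) = -2 * W p)
    (V : ℝ × ℝ → ℝ)
    (hV : ∀ p : ℝ × ℝ, V p = (ω^2 / 2) * (p.1^2 + p.2^2) + W p)
    (x y : ℝ → ℝ)
    (hx : Differentiable ℝ x) (hx' : Differentiable ℝ (deriv x))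
    (hy : Differentiable ℝ y) (hy' : Differentiable ℝ (deriv y))
    (hxeq : ∀ t, deriv (deriv x) t = -(fderiv ℝ V (x t, y t) (1, 0)))
    (hyeq : ∀ t, deriv (deriv y) t = -(fderiv ℝ V (x t, y t) (0, 1)))
    (E : ℝ)
    (hE : ∀ t, E = (1/2) * ((deriv x t)^2 + (deriv y t)^2) + V (x t, y t)) :
    ∀ t s : ℝ,
      -(1/ω) * Real.cos (2*ω*t) * E - Real.sin (2*ω*t) * (x t * deriv x t + y t * deriv y t)
        + ω * Real.cos (2*ω*t) * ((x t)^2 + (y t)^2) =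
      -(1/ω) * Real.cos (2*ω*s) * E - Real.sin (2*ω*s) * (x s * deriv x s + y s * deriv y s)
        + ω * Real.cos (2*ω*s) * ((x s)^2 + (y s)^2) := by
  obtain rfl : V = _ := funext hV
  have hWd : Differentiable ℝ W := hW.differentiable one_ne_zero
  have hρ : ∀ t, HasDerivAt (fun t => x t ^ 2 + y t ^ 2)
      (2 * (x t * deriv x t + y t * deriv y t)) t := by
    intro t
    refine (((hx t).hasDerivAt.pow 2).add ((hy t).hasDerivAt.pow 2)).congr_deriv ?_
    ring
  have hD : ∀ t, HasDerivAt (fun t => x t * deriv x t + y t * deriv y t)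
      (2 * E - 2 * ω ^ 2 * (x t ^ 2 + y t ^ 2)) t := by
    intro t
    refine (((hx t).hasDerivAt.mul (hx' t).hasDerivAt).add
      ((hy t).hasDerivAt.mul (hy' t).hasDerivAt)).congr_deriv ?_
    rw [hxeq, hyeq]
    linear_combination -(radial_fderiv_isotropicOscillator_add (hWd _) ω (hhom (x t, y t))) -
      2 * hE t
  exact cos_sin_combination_const_of_hasDerivAt hω.ne' hρ hD
end

section
/- Let a ∈ ℝ, and consider V(x,y) = (1/2)(x² + y²) + (a·y + x)³. If (x,y) : ℝ → ℝ² satisfies ẍ = -∂V/∂x, ÿ = -∂V/∂y, then the quantity I(t) = sin t · (a·ẋ(t) - ẏ(t)) - cos t · (a·x(t) - y(t)) is constant in t. -/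
/-!
The cubic part of the potential depends only on `a * y + x`, so its gradient is parallel to
`(1, a)` and is annihilated by the combination `a * x - y`. Hence `u = a * x - y` solves the
harmonic oscillator `u'' = -u`, and `sin t * u' t - cos t * u t` is a first integral of it.
-/

open Real

theorem sin_mul_deriv_sub_cos_mul_eq_of_deriv_deriv_eq_neg {u : ℝ → ℝ}
    (hu : Differentiable ℝ u) (hu' : Differentiable ℝ (deriv u))
    (hosc : ∀ t, deriv (deriv u) t = -u t) (t s : ℝ) :
    sin t * deriv u t - cos t * u t = sin s * deriv u s - cos s * u s := by
  let I : ℝ → ℝ := fun t => sin t * deriv u t - cos t * u t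
  have hI : ∀ t, HasDerivAt I 0 t := fun t => by
    have h : HasDerivAt I (cos t * deriv u t + sin t * deriv (deriv u) t
        - (-sin t * u t + cos t * deriv u t)) t :=
      ((hasDerivAt_sin t).mul (hu' t).hasDerivAt).sub ((hasDerivAt_cos t).mul (hu t).hasDerivAt)
    convert h using 1
    rw [hosc]
    ring
  exact is_const_of_deriv_eq_zero (fun t => (hI t).differentiableAt)
    (fun t => (hI t).deriv) t s

theorem deriv_const_mul_sub {f g : ℝ → ℝ} (hf : Differentiable ℝ f) (hg : Differentiable ℝ g)
    (c : ℝ) : deriv (fun t => c * f t - g t) = fun t => c * deriv f t - deriv g t := by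
  ext t
  exact (((hf t).hasDerivAt.const_mul c).sub (hg t).hasDerivAt).deriv

theorem stmt_19 (a : ℝ) (x y : ℝ → ℝ)
    (hx : Differentiable ℝ x) (hx' : Differentiable ℝ (deriv x))
    (hy : Differentiable ℝ y) (hy' : Differentiable ℝ (deriv y))
    (hxeq : ∀ t, deriv (deriv x) t = -(x t + 3 * (a * y t + x t)^2))
    (hyeq : ∀ t, deriv (deriv y) t = -(y t + 3 * a * (a * y t + x t)^2)) :
    ∀ t s : ℝ,
      Real.sin t * (a * deriv x t - deriv y t) - Real.cos t * (a * x t - y t) =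
      Real.sin s * (a * deriv x s - deriv y s) - Real.cos s * (a * x s - y s) := by
  let u : ℝ → ℝ := fun t => a * x t - y t
  have hu' : deriv u = fun t => a * deriv x t - deriv y t := deriv_const_mul_sub hx hy a
  have hu'' : deriv (deriv u) = fun t => a * deriv (deriv x) t - deriv (deriv y) t := by
    rw [hu']
    exact deriv_const_mul_sub hx' hy' a
  have hosc : ∀ t, deriv (deriv u) t = -u t := fun t => by
    simp only [hu'', hxeq, hyeq, u]
    ring
  have hu : Differentiable ℝ u := (hx.const_mul a).sub hy
  have hdu : Differentiable ℝ (deriv u) := hu' ▸ (hx'.const_mul a).sub hy'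
  intro t s
  simpa only [hu'] using sin_mul_deriv_sub_cos_mul_eq_of_deriv_deriv_eq_neg hu hdu hosc t s
end
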